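/- Let H be an N×N complex Hermitian matrix with H² = H, let |ψ0⟩ ∈ ℂ^N be a unit vector with q0 := ⟨ψ0|H|ψ0⟩ ∈ (0,1), ψ0 = |ψ0⟩⟨ψ0|, X0 := [H, ψ0], Y0 := i[H, X0], and c0 := √(2 q0 (1 − q0)), so that ‖X0‖_F = ‖Y0‖_F = c0 and ⟨X0, Y0⟩ = 0. For U unitary and x, y ∈ ℝ, let η := (x X0 + y Y0) U and let R_U(η) := e^{i a1 H} e^{i b1 ψ0} e^{−iπH} e^{i b2 ψ0} e^{−i a2 H} U denote the 5-factor retraction, where R := √(x² + y²), A := atan2(y, x), a1 := A + π/2, a2 := A − π/2, b1 := −R/2, b2 := R/2. Then ‖R_U(η) − U‖_F ≤ ‖η‖_F, where ‖η‖_F = c0 R. -/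

import Mathlib

open Matrix

/-- The rank-one projector `|ψ⟩⟨ψ|` associated with a vector `ψ`. -/
noncomputable def rankOneProj {N : ℕ} (ψ : Fin N → ℂ) : Matrix (Fin N) (Fin N) ℂ :=
  Matrix.vecMulVec ψ (star ψ)

/-- The Frobenius norm `‖A‖_F = √(Tr(A†A))`. -/
noncomputable def frobNorm {N : ℕ} (A : Matrix (Fin N) (Fin N) ℂ) : ℝ :=
  Real.sqrt (Matrix.trace (Aᴴ * A)).re

/-- The gate `e^{iθM}` for a matrix `M` and a real angle `θ`. -/
noncomputable def expGate {N : ℕ} (M : Matrix (Fin N) (Fin N) ℂ) (θ : ℝ) :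
    Matrix (Fin N) (Fin N) ℂ :=
  NormedSpace.exp ((Complex.I * (θ : ℂ)) • M)

/-- The 5-factor Grover-compatible retraction
`R_U(η) = e^{i a₁ H} e^{i b₁ ψ₀} e^{−iπH} e^{i b₂ ψ₀} e^{−i a₂ H} U`
for the tangent direction with coordinates `(x, y)`, where `(A, R)` are the polar
coordinates of `(x, y)` (`A = atan2(y, x)`, `R = √(x² + y²)`), `a₁ = A + π/2`,
`a₂ = A − π/2`, `b₁ = −R/2`, `b₂ = R/2`. -/
noncomputable def retr5 {N : ℕ} (H P : Matrix (Fin N) (Fin N) ℂ) (x y : ℝ)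
    (U : Matrix (Fin N) (Fin N) ℂ) : Matrix (Fin N) (Fin N) ℂ :=
  let R : ℝ := Real.sqrt (x ^ 2 + y ^ 2)
  let A : ℝ := Complex.arg ((x : ℂ) + (y : ℂ) * Complex.I)
  expGate H (A + Real.pi / 2) * expGate P (-R / 2) * expGate H (-Real.pi) *
    expGate P (R / 2) * expGate H (-(A - Real.pi / 2)) * U

/-!
Right multiplication by `U` is a Frobenius isometry, so with `V` the product of the five gates it
suffices to bound `‖V - 1‖_F`, and for unitary `V` one has `‖V - 1‖_F² = 2N - 2 Re Tr V`. By
cyclicity of the trace the two outer `H`-gates merge into `e^{iπH} = 1 - 2H`, so `Tr V` only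
involves the reflection `1 - 2H` and the gates `1 + (e^{∓iR/2} - 1) ψ₀`; the relation
`ψ₀ H ψ₀ = q₀ ψ₀` then gives `Tr V = N - 16 q₀ (1 - q₀) sin² (R/4)`. Hence
`‖R_U(η) - U‖_F = 4 c₀ |sin (R/4)| ≤ c₀ R`. The value of `‖η‖_F` comes from the Hilbert–Schmidt
Gram matrix of `X₀, Y₀`, computed from the same relation.
-/

theorem IsIdempotentElem.exp_smul {𝔸 : Type*} [NormedRing 𝔸] [NormedAlgebra ℂ 𝔸]
    [CompleteSpace 𝔸] {Q : 𝔸} (hQ : IsIdempotentElem Q) (c : ℂ) :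
    NormedSpace.exp (c • Q) = 1 + (Complex.exp c - 1) • Q := by
  have hterm : ∀ n : ℕ, ((n.factorial : ℂ)⁻¹) • (c • Q) ^ n
      = ((n.factorial : ℂ)⁻¹ • c ^ n) • Q + if n = 0 then 1 - Q else 0 := by
    rintro (_ | n)
    · simp
    · rw [smul_pow, hQ.pow_succ_eq, smul_smul, smul_eq_mul]
      simp
  have hsum := ((NormedSpace.exp_series_hasSum_exp' (𝕂 := ℂ) c).smul_const Q).add
    (hasSum_ite_eq 0 (1 - Q))
  rw [← funext hterm, ← Complex.exp_eq_exp_ℂ] at hsum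
  rw [(NormedSpace.exp_series_hasSum_exp' (𝕂 := ℂ) (c • Q)).unique hsum, sub_smul, one_smul]
  abel

section ExpGate

variable {N : ℕ} {Q : Matrix (Fin N) (Fin N) ℂ}

theorem expGate_of_isIdempotentElem (hQ : IsIdempotentElem Q) (θ : ℝ) :
    expGate Q θ = 1 + (Complex.exp (Complex.I * θ) - 1) • Q :=
  open scoped Norms.Operator in hQ.exp_smul _

theorem expGate_pi_of_isIdempotentElem (hQ : IsIdempotentElem Q) :
    expGate Q Real.pi = 1 - (2 : ℂ) • Q := by
  rw [expGate_of_isIdempotentElem hQ, mul_comm, Complex.exp_pi_mul_I]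
  norm_num [sub_eq_add_neg]

theorem expGate_neg_pi_of_isIdempotentElem (hQ : IsIdempotentElem Q) :
    expGate Q (-Real.pi) = 1 - (2 : ℂ) • Q := by
  rw [expGate_of_isIdempotentElem hQ, Complex.ofReal_neg, mul_neg, mul_comm, Complex.exp_neg,
    Complex.exp_pi_mul_I]
  norm_num [sub_eq_add_neg]

variable (Q) in
theorem expGate_add (θ φ : ℝ) : expGate Q (θ + φ) = expGate Q θ * expGate Q φ := by
  rw [expGate, expGate, expGate,
    ← Matrix.exp_add_of_commute _ _ (((Commute.refl Q).smul_left _).smul_right _),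
    Complex.ofReal_add, mul_add, add_smul]

theorem expGate_conjTranspose (hQ : Q.IsHermitian) (θ : ℝ) :
    (expGate Q θ)ᴴ = expGate Q (-θ) := by
  rw [expGate, ← Matrix.exp_conjTranspose, conjTranspose_smul, hQ.eq, expGate]
  simp [Complex.conj_ofReal]

theorem expGate_mem_unitaryGroup (hQ : Q.IsHermitian) (θ : ℝ) :
    expGate Q θ ∈ unitaryGroup (Fin N) ℂ := by
  rw [mem_unitaryGroup_iff, star_eq_conjTranspose, expGate_conjTranspose hQ, ← expGate_add,
    add_neg_cancel, expGate, Complex.ofReal_zero, mul_zero, zero_smul, NormedSpace.exp_zero]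

end ExpGate

section Frobenius

variable {N : ℕ}

theorem frobNorm_mul_of_mem_unitaryGroup (A : Matrix (Fin N) (Fin N) ℂ)
    {U : Matrix (Fin N) (Fin N) ℂ} (hU : U ∈ unitaryGroup (Fin N) ℂ) :
    frobNorm (A * U) = frobNorm A := by
  have hUU : U * Uᴴ = 1 := mem_unitaryGroup_iff.mp hU
  rw [frobNorm, frobNorm, conjTranspose_mul, mul_assoc, trace_mul_comm, mul_assoc, mul_assoc,
    hUU, mul_one]

theorem frobNorm_sub_one_of_mem_unitaryGroup {V : Matrix (Fin N) (Fin N) ℂ}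
    (hV : V ∈ unitaryGroup (Fin N) ℂ) :
    frobNorm (V - 1) = √(2 * N - 2 * (trace V).re) := by
  have hVV : Vᴴ * V = 1 := mem_unitaryGroup_iff'.mp hV
  rw [frobNorm, conjTranspose_sub, conjTranspose_one, sub_mul, mul_sub, mul_sub, hVV, mul_one,
    one_mul, one_mul, trace_sub, trace_sub, trace_sub, trace_conjTranspose, trace_one,
    Fintype.card_fin]
  simp only [Complex.sub_re, Complex.natCast_re, Complex.star_def, Complex.conj_re]
  ring_nf

theorem frobNorm_smul_add_smul {X Y : Matrix (Fin N) (Fin N) ℂ} (hXY : trace (Xᴴ * Y) = 0)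
    (x y : ℝ) :
    frobNorm ((x : ℂ) • X + (y : ℂ) • Y) =
      √(x ^ 2 * (trace (Xᴴ * X)).re + y ^ 2 * (trace (Yᴴ * Y)).re) := by
  have hYX : trace (Yᴴ * X) = 0 := by
    rw [← conjTranspose_conjTranspose X, ← conjTranspose_mul, trace_conjTranspose, hXY, star_zero]
  rw [frobNorm]
  simp only [conjTranspose_add, conjTranspose_smul, add_mul, mul_add, Matrix.smul_mul,
    Matrix.mul_smul, trace_add, trace_smul, hXY, hYX, smul_smul, smul_eq_mul, mul_zero,
    add_zero, zero_add, Complex.add_re, Complex.star_def, Complex.conj_ofReal,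
    ← Complex.ofReal_mul, Complex.re_ofReal_mul]
  ring_nf

end Frobenius

section RankOne

variable {N : ℕ} (ψ : Fin N → ℂ)

theorem rankOneProj_mul_mul_rankOneProj (M : Matrix (Fin N) (Fin N) ℂ) :
    rankOneProj ψ * M * rankOneProj ψ = (star ψ ⬝ᵥ (M *ᵥ ψ)) • rankOneProj ψ := by
  rw [rankOneProj, vecMulVec_mul, vecMulVec_mul_vecMulVec, vecMulVec_smul, dotProduct_mulVec]

theorem isHermitian_rankOneProj : (rankOneProj ψ).IsHermitian := by
  rw [IsHermitian, rankOneProj, conjTranspose_vecMulVec, star_star]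

variable {ψ} (hψ : star ψ ⬝ᵥ ψ = 1)
include hψ

theorem isIdempotentElem_rankOneProj : IsIdempotentElem (rankOneProj ψ) := by
  rw [isIdempotentElem_iff]
  simpa [hψ] using rankOneProj_mul_mul_rankOneProj ψ 1

theorem trace_rankOneProj : trace (rankOneProj ψ) = 1 := by
  rw [rankOneProj, trace_vecMulVec, dotProduct_comm, hψ]

end RankOne

theorem trace_mul_commutator_self {n : Type*} [Fintype n] (X H : Matrix n n ℂ) :
    trace (X * (H * X - X * H)) = 0 := by
  rw [mul_sub, trace_sub, trace_mul_comm X (X * H), mul_assoc, sub_self]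

theorem conjTranspose_commutator {n : Type*} [Fintype n] {A B : Matrix n n ℂ}
    (hA : A.IsHermitian) (hB : B.IsHermitian) : (A * B - B * A)ᴴ = -(A * B - B * A) := by
  rw [conjTranspose_sub, conjTranspose_mul, conjTranspose_mul, hA.eq, hB.eq, neg_sub]

section ProjectorPair

variable {n : Type*} [Fintype n] {H P : Matrix n n ℂ} {q : ℂ}

theorem mul_mul_mul_of_mul_mul_eq_smul (hPHP : P * H * P = q • P) (M : Matrix n n ℂ) :
    P * (H * (P * M)) = q • (P * M) := by
  rw [← mul_assoc, ← mul_assoc, hPHP, smul_mul]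

theorem mul_mul_of_mul_mul_eq_smul (hPHP : P * H * P = q • P) : P * (H * P) = q • P := by
  rw [← mul_assoc, hPHP]

variable (hH : IsIdempotentElem H) (hP : IsIdempotentElem P) (hPHP : P * H * P = q • P)
  (htrP : trace P = 1)
include hP hPHP htrP

theorem trace_mul_of_mul_mul_eq_smul : trace (P * H) = q := by
  rw [← hP.eq, mul_assoc, trace_mul_comm, hPHP, trace_smul, htrP, smul_eq_mul, mul_one]

theorem trace_mul_of_mul_mul_eq_smul' : trace (H * P) = q := by
  rw [trace_mul_comm, trace_mul_of_mul_mul_eq_smul hP hPHP htrP]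

include hH

theorem trace_mul_mul_of_mul_mul_eq_smul : trace (H * (P * H)) = q := by
  rw [trace_mul_comm, mul_assoc, hH.eq, trace_mul_of_mul_mul_eq_smul hP hPHP htrP]

theorem trace_commutator_mul_self :
    trace ((H * P - P * H) * (H * P - P * H)) = -(2 * q * (1 - q)) := by
  simp only [sub_mul, mul_sub, mul_assoc, hH.mul_self_mul, hP.mul_self_mul,
    mul_mul_mul_of_mul_mul_eq_smul hPHP, mul_mul_of_mul_mul_eq_smul hPHP, Matrix.mul_smul,
    trace_sub, trace_smul, trace_mul_of_mul_mul_eq_smul hP hPHP htrP,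
    trace_mul_of_mul_mul_eq_smul' hP hPHP htrP, trace_mul_mul_of_mul_mul_eq_smul hH hP hPHP htrP,
    htrP, smul_eq_mul]
  ring

theorem trace_double_commutator_mul_self :
    trace ((H * (H * P - P * H) - (H * P - P * H) * H) *
      (H * (H * P - P * H) - (H * P - P * H) * H)) = 2 * q * (1 - q) := by
  simp only [sub_mul, mul_sub, mul_assoc, hH.mul_self_mul, hP.mul_self_mul, hH.eq,
    mul_mul_mul_of_mul_mul_eq_smul hPHP, mul_mul_of_mul_mul_eq_smul hPHP, Matrix.mul_smul,
    trace_sub, trace_smul, trace_mul_of_mul_mul_eq_smul hP hPHP htrP,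
    trace_mul_of_mul_mul_eq_smul' hP hPHP htrP, trace_mul_mul_of_mul_mul_eq_smul hH hP hPHP htrP,
    htrP, smul_eq_mul]
  ring

variable [DecidableEq n] in
theorem trace_reflection_mul (α β : ℂ) :
    trace ((1 - (2 : ℂ) • H) * (1 + α • P) * (1 - (2 : ℂ) • H) * (1 + β • P)) =
      Fintype.card n + α + β + α * β * (1 - 2 * q) ^ 2 := by
  simp only [add_mul, mul_add, sub_mul, mul_sub, mul_assoc, one_mul, mul_one, Matrix.smul_mul,
    Matrix.mul_smul, hH.eq, hP.eq, mul_mul_of_mul_mul_eq_smul hPHP, trace_sub, trace_add,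
    trace_smul, trace_one, trace_mul_of_mul_mul_eq_smul hP hPHP htrP,
    trace_mul_of_mul_mul_eq_smul' hP hPHP htrP, trace_mul_mul_of_mul_mul_eq_smul hH hP hPHP htrP,
    htrP, smul_eq_mul]
  ring

end ProjectorPair

section Grover

variable {N : ℕ} {H P : Matrix (Fin N) (Fin N) ℂ}

theorem frobNorm_tangent {q : ℝ} (hHh : H.IsHermitian) (hPh : P.IsHermitian)
    (hH : IsIdempotentElem H) (hP : IsIdempotentElem P) (hPHP : P * H * P = (q : ℂ) • P)
    (htrP : trace P = 1) (x y : ℝ) :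
    frobNorm ((x : ℂ) • (H * P - P * H) +
        (y : ℂ) • (Complex.I • (H * (H * P - P * H) - (H * P - P * H) * H))) =
      √(2 * q * (1 - q) * (x ^ 2 + y ^ 2)) := by
  set X := H * P - P * H
  set Z := H * X - X * H
  have hX : Xᴴ = -X := conjTranspose_commutator hHh hPh
  have hZ : Zᴴ = Z := by
    rw [conjTranspose_sub, conjTranspose_mul, conjTranspose_mul, hX, hHh.eq, mul_neg, neg_mul,
      sub_neg_eq_add, neg_add_eq_sub]
  have hXX : trace (Xᴴ * X) = 2 * q * (1 - q) := by
    rw [hX, neg_mul, trace_neg, trace_commutator_mul_self hH hP hPHP htrP, neg_neg]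
  have hYY : trace ((Complex.I • Z)ᴴ * (Complex.I • Z)) = 2 * q * (1 - q) := by
    rw [conjTranspose_smul, hZ, Matrix.smul_mul, Matrix.mul_smul, smul_smul, trace_smul,
      Complex.star_def, Complex.conj_I, neg_mul, Complex.I_mul_I, neg_neg, one_smul,
      trace_double_commutator_mul_self hH hP hPHP htrP]
  have hXY : trace (Xᴴ * (Complex.I • Z)) = 0 := by
    rw [hX, Matrix.mul_smul, trace_smul, neg_mul, trace_neg, trace_mul_commutator_self,
      neg_zero, smul_zero]
  rw [frobNorm_smul_add_smul hXY, hXX, hYY]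
  norm_cast
  ring_nf

variable (H P) in
noncomputable def retrGates (a r : ℝ) : Matrix (Fin N) (Fin N) ℂ :=
  expGate H (a + Real.pi / 2) * expGate P (-r / 2) * expGate H (-Real.pi) *
    expGate P (r / 2) * expGate H (-(a - Real.pi / 2))

theorem retr5_eq_retrGates_mul (x y : ℝ) (U : Matrix (Fin N) (Fin N) ℂ) :
    retr5 H P x y U =
      retrGates H P (Complex.arg ((x : ℂ) + (y : ℂ) * Complex.I)) √(x ^ 2 + y ^ 2) * U :=
  rfl

theorem retrGates_mem_unitaryGroup (hH : H.IsHermitian) (hP : P.IsHermitian) (a r : ℝ) :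
    retrGates H P a r ∈ unitaryGroup (Fin N) ℂ := by
  unfold retrGates
  repeat' apply Submonoid.mul_mem
  all_goals apply expGate_mem_unitaryGroup; assumption

theorem trace_retrGates {q : ℂ} (hH : IsIdempotentElem H) (hP : IsIdempotentElem P)
    (hPHP : P * H * P = q • P) (htrP : trace P = 1) (a r : ℝ) :
    trace (retrGates H P a r) = N - 16 * q * (1 - q) * Real.sin (r / 4) ^ 2 := by
  have hcycle : trace (retrGates H P a r) = trace (expGate H Real.pi * expGate P (-r / 2) *
      expGate H (-Real.pi) * expGate P (r / 2)) := by
    rw [retrGates, trace_mul_comm, ← mul_assoc, ← mul_assoc, ← mul_assoc, ← expGate_add]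
    ring_nf
  have hsum : Complex.exp (Complex.I * ↑(r / 2)) + Complex.exp (Complex.I * ↑(-r / 2)) =
      2 - 4 * Real.sin (r / 4) ^ 2 := by
    rw [show Complex.I * ↑(r / 2) = ↑(r / 2) * Complex.I by ring,
      show Complex.I * ↑(-r / 2) = -↑(r / 2) * Complex.I by push_cast; ring, ← Complex.two_cos,
      show ((r / 2 : ℝ) : ℂ) = 2 * ((r / 4 : ℝ) : ℂ) by push_cast; ring, Complex.cos_two_mul,
      Complex.cos_sq', Complex.ofReal_sin]
    ring
  have hprod : Complex.exp (Complex.I * ↑(-r / 2)) * Complex.exp (Complex.I * ↑(r / 2)) = 1 := by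
    rw [← Complex.exp_add, ← mul_add, ← Complex.ofReal_add, neg_div, neg_add_cancel,
      Complex.ofReal_zero, mul_zero, Complex.exp_zero]
  rw [hcycle, expGate_pi_of_isIdempotentElem hH, expGate_neg_pi_of_isIdempotentElem hH,
    expGate_of_isIdempotentElem hP, expGate_of_isIdempotentElem hP,
    trace_reflection_mul hH hP hPHP htrP, Fintype.card_fin]
  linear_combination (1 - 2 * q) ^ 2 * hprod + (1 - (1 - 2 * q) ^ 2) * hsum

theorem frobNorm_retrGates_sub_one_le {q : ℝ} (hHh : H.IsHermitian) (hPh : P.IsHermitian)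
    (hH : IsIdempotentElem H) (hP : IsIdempotentElem P) (hPHP : P * H * P = (q : ℂ) • P)
    (htrP : trace P = 1) (hq₀ : 0 ≤ q) (hq₁ : q ≤ 1) (a r : ℝ) :
    frobNorm (retrGates H P a r - 1) ≤ √(2 * q * (1 - q)) * |r| := by
  have hre : (trace (retrGates H P a r)).re = N - 16 * q * (1 - q) * Real.sin (r / 4) ^ 2 := by
    rw [trace_retrGates hH hP hPHP htrP]
    norm_cast
  have hq : 0 ≤ q * (1 - q) := mul_nonneg hq₀ (sub_nonneg.mpr hq₁)
  rw [frobNorm_sub_one_of_mem_unitaryGroup (retrGates_mem_unitaryGroup hHh hPh a r), hre,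
    ← Real.sqrt_sq_eq_abs, ← Real.sqrt_mul (by positivity)]
  apply Real.sqrt_le_sqrt
  nlinarith [mul_le_mul_of_nonneg_left (Real.sin_sq_le_sq (x := r / 4)) hq]

end Grover

theorem stmt_12 {N : ℕ} (H : Matrix (Fin N) (Fin N) ℂ)
    (hHerm : H.IsHermitian) (hProj : H * H = H)
    (ψ₀ : Fin N → ℂ) (hψ₀ : star ψ₀ ⬝ᵥ ψ₀ = 1)
    (q₀ : ℝ) (hq₀ : star ψ₀ ⬝ᵥ (H *ᵥ ψ₀) = (q₀ : ℂ))
    (hq₀pos : 0 < q₀) (hq₀lt : q₀ < 1)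
    (X₀ Y₀ : Matrix (Fin N) (Fin N) ℂ)
    (hX₀ : X₀ = H * rankOneProj ψ₀ - rankOneProj ψ₀ * H)
    (hY₀ : Y₀ = Complex.I • (H * X₀ - X₀ * H))
    (c₀ : ℝ) (hc₀ : c₀ = Real.sqrt (2 * q₀ * (1 - q₀)))
    (U : Matrix (Fin N) (Fin N) ℂ) (hU : U ∈ Matrix.unitaryGroup (Fin N) ℂ)
    (x y : ℝ) (η : Matrix (Fin N) (Fin N) ℂ)
    (hη : η = ((x : ℂ) • X₀ + (y : ℂ) • Y₀) * U) :
    frobNorm (retr5 H (rankOneProj ψ₀) x y U - U) ≤ frobNorm η ∧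
    frobNorm η = c₀ * Real.sqrt (x ^ 2 + y ^ 2) := by
  have hPh := isHermitian_rankOneProj ψ₀
  have hP := isIdempotentElem_rankOneProj hψ₀
  have hPHP : rankOneProj ψ₀ * H * rankOneProj ψ₀ = (q₀ : ℂ) • rankOneProj ψ₀ := by
    rw [rankOneProj_mul_mul_rankOneProj, hq₀]
  have htrP := trace_rankOneProj hψ₀
  have hnorm : frobNorm η = c₀ * √(x ^ 2 + y ^ 2) := by
    rw [hη, hY₀, hX₀, frobNorm_mul_of_mem_unitaryGroup _ hU,
      frobNorm_tangent hHerm hPh hProj hP hPHP htrP, hc₀, Real.sqrt_mul (by nlinarith)]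
  refine ⟨?_, hnorm⟩
  rw [hnorm, hc₀, retr5_eq_retrGates_mul, ← sub_one_mul, frobNorm_mul_of_mem_unitaryGroup _ hU]
  exact (frobNorm_retrGates_sub_one_le hHerm hPh hProj hP hPHP htrP hq₀pos.le hq₀lt.le _ _).trans_eq
    (by rw [abs_of_nonneg (Real.sqrt_nonneg _)])
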